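/- Fix ξ ∈ ℝ, let α = ξ and ν = ξ², and let u be an (α,ξ,ν)-eigenfunction (so in particular u'(0) = 0). Define k₀(t) := ( −ξ/2 + (2/3)(ξ−t) ) u(t) + ( (2/3)(1−ξ²) + ξ(ξ−t) − (1/3)(ξ−t)² ) u'(t). Then k₀ satisfies the pointwise identity −k₀''(t) + ((ξ−t)² + 1 − ξ²)k₀(t) = −(C_ξ u)(t) for all t ≥ 0, and the Neumann condition k₀'(0) = 0. -/

import Mathlib

open MeasureTheory

/-- An `(α,ξ,ν)`-eigenfunction: a smooth function on `ℝ` which, together with all its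
derivatives, decays faster than any polynomial on `[0,∞)`, solves
`−u'' + ((ξ−t)² + 1)u = νu` on `[0,∞)`, and satisfies the Robin condition
`u'(0) = (α−ξ)u(0)`. -/
def IsEigen (α ξ ν : ℝ) (u : ℝ → ℝ) : Prop :=
  ContDiff ℝ (⊤ : ℕ∞) u ∧
  (∀ n k : ℕ, ∃ C : ℝ, ∀ t : ℝ, 0 ≤ t → |t| ^ k * |iteratedDeriv n u t| ≤ C) ∧
  (∀ t : ℝ, 0 ≤ t → -(deriv (deriv u) t) + ((ξ - t) ^ 2 + 1) * u t = ν * u t) ∧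
  deriv u 0 = (α - ξ) * u 0

/-- The operator `C_ξ w = 2( t·(n₀w) − ξw − w' + t²(ξ−t)w )`, where
`(n₀w)(t) = −w''(t) + ((ξ−t)² + 1)w(t)`. -/
noncomputable def Cxi (ξ : ℝ) (w : ℝ → ℝ) (t : ℝ) : ℝ :=
  2 * (t * (-(deriv (deriv w) t) + ((ξ - t) ^ 2 + 1) * w t)
    - ξ * w t - deriv w t + t ^ 2 * (ξ - t) * w t)

/-- The explicit corrector
`k₀ = (−ξ/2 + (2/3)(ξ−t))u + ((2/3)(1−ξ²) + ξ(ξ−t) − (1/3)(ξ−t)²)u'`. -/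
noncomputable def kzero (ξ : ℝ) (u : ℝ → ℝ) (t : ℝ) : ℝ :=
  (-ξ / 2 + 2 / 3 * (ξ - t)) * u t
    + (2 / 3 * (1 - ξ ^ 2) + ξ * (ξ - t) - 1 / 3 * (ξ - t) ^ 2) * deriv u t

/-!
On `[0,∞)` the eigenvalue equation with `ν = ξ²` reads `u'' = V u` with
`V(t) = (ξ−t)² + 1 − ξ²`, and differentiating it gives `u''' = V' u + V u'`.
Since `k₀ = p u + q u'` with `p` affine and `q` quadratic, `k₀''` is a combination of
`u, u', u'', u'''`; eliminating `u''` and `u'''` leaves a polynomial identity in `u, u'`.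
At `t = 0` the Robin condition with `α = ξ` gives `u'(0) = 0` and the equation gives
`u''(0) = u(0)`, so `k₀'(0) = −(2/3)u(0) + q(0)u(0) = 0` because `q(0) = 2/3`.
-/

open Set

theorem deriv_eq_of_eqOn_Ici {f g : ℝ → ℝ} {a t : ℝ} (hf : DifferentiableAt ℝ f t)
    (hg : DifferentiableAt ℝ g t) (hfg : EqOn f g (Ici a)) (ht : a ≤ t) :
    deriv f t = deriv g t := by
  rw [← hf.derivWithin (uniqueDiffOn_Ici a t ht), ← hg.derivWithin (uniqueDiffOn_Ici a t ht),
    derivWithin_congr hfg (hfg ht)]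

theorem hasDerivAt_mul_add_mul_deriv {a b f : ℝ → ℝ} {a' b' t : ℝ} (ha : HasDerivAt a a' t)
    (hb : HasDerivAt b b' t) (hf : DifferentiableAt ℝ f t)
    (hf' : DifferentiableAt ℝ (deriv f) t) :
    HasDerivAt (fun s => a s * f s + b s * deriv f s)
      (a' * f t + (a t + b') * deriv f t + b t * deriv (deriv f) t) t :=
  ((ha.mul hf.hasDerivAt).fun_add (hb.mul hf'.hasDerivAt)).congr_deriv (by ring)

namespace IsEigen

variable {α ξ ν : ℝ} {u : ℝ → ℝ}

theorem differentiable_iterate_deriv (hu : IsEigen α ξ ν u) (n : ℕ) :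
    Differentiable ℝ (deriv^[n] u) :=
  (hu.1.iterate_deriv n).differentiable (by simp)

theorem deriv_deriv_eq (hu : IsEigen α ξ ν u) {t : ℝ} (ht : 0 ≤ t) :
    deriv (deriv u) t = ((ξ - t) ^ 2 + 1 - ν) * u t := by
  linarith [hu.2.2.1 t ht]

theorem deriv_deriv_deriv_eq (hu : IsEigen α ξ ν u) {t : ℝ} (ht : 0 ≤ t) :
    deriv (deriv (deriv u)) t
      = -(2 * (ξ - t)) * u t + ((ξ - t) ^ 2 + 1 - ν) * deriv u t := by
  have hu₀ : Differentiable ℝ u := hu.differentiable_iterate_deriv 0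
  have hu₂ : Differentiable ℝ (deriv (deriv u)) := hu.differentiable_iterate_deriv 2
  have hV : ∀ s, HasDerivAt (fun s => (ξ - s) ^ 2 + 1 - ν) (-(2 * (ξ - s))) s := fun s =>
    ((((hasDerivAt_id s).const_sub ξ).pow 2).add_const 1 |>.sub_const ν).congr_deriv (by simp)
  have hVu : ∀ s, HasDerivAt (fun s => ((ξ - s) ^ 2 + 1 - ν) * u s)
      (-(2 * (ξ - s)) * u s + ((ξ - s) ^ 2 + 1 - ν) * deriv u s) s := fun s =>
    (hV s).mul (hu₀ s).hasDerivAt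
  rw [deriv_eq_of_eqOn_Ici (hu₂ t) (hVu t).differentiableAt
    (fun s hs => hu.deriv_deriv_eq hs) ht, (hVu t).deriv]

end IsEigen

theorem hasDerivAt_kzero_coeff_left (ξ t : ℝ) :
    HasDerivAt (fun s => -ξ / 2 + 2 / 3 * (ξ - s)) (-(2 / 3)) t :=
  (((hasDerivAt_id t).const_sub ξ).const_mul (2 / 3) |>.const_add (-ξ / 2)).congr_deriv
    (by simp)

theorem hasDerivAt_kzero_coeff_right (ξ t : ℝ) :
    HasDerivAt (fun s => 2 / 3 * (1 - ξ ^ 2) + ξ * (ξ - s) - 1 / 3 * (ξ - s) ^ 2)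
      (-ξ + 2 / 3 * (ξ - t)) t := by
  have hsub := (hasDerivAt_id t).const_sub ξ
  exact ((hsub.const_mul ξ).const_add _ |>.sub ((hsub.pow 2).const_mul (1 / 3))).congr_deriv
    (by simp only [id]; ring)

section kzero

variable {ξ : ℝ} {u : ℝ → ℝ}

theorem deriv_kzero (hu : Differentiable ℝ u) (hu' : Differentiable ℝ (deriv u)) :
    deriv (kzero ξ u) = fun t => -(2 / 3) * u t
      + ((-3 * ξ / 2 + 4 / 3 * (ξ - t)) * deriv u t
        + (2 / 3 * (1 - ξ ^ 2) + ξ * (ξ - t) - 1 / 3 * (ξ - t) ^ 2) * deriv (deriv u) t) := by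
  funext t
  refine (hasDerivAt_mul_add_mul_deriv (hasDerivAt_kzero_coeff_left ξ t)
    (hasDerivAt_kzero_coeff_right ξ t) (hu t) (hu' t)).deriv.trans ?_
  ring

theorem deriv_deriv_kzero (hu : Differentiable ℝ u) (hu' : Differentiable ℝ (deriv u))
    (hu'' : Differentiable ℝ (deriv (deriv u))) (t : ℝ) :
    deriv (deriv (kzero ξ u)) t = -2 * deriv u t + (-5 * ξ / 2 + 2 * (ξ - t)) * deriv (deriv u) t
      + (2 / 3 * (1 - ξ ^ 2) + ξ * (ξ - t) - 1 / 3 * (ξ - t) ^ 2) * deriv (deriv (deriv u)) t := by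
  have hr : HasDerivAt (fun s => -3 * ξ / 2 + 4 / 3 * (ξ - s)) (-(4 / 3)) t :=
    (((hasDerivAt_id t).const_sub ξ).const_mul (4 / 3) |>.const_add _).congr_deriv (by simp)
  rw [deriv_kzero hu hu', (((hu t).hasDerivAt.const_mul (-(2 / 3))).fun_add
    (hasDerivAt_mul_add_mul_deriv hr (hasDerivAt_kzero_coeff_right ξ t) (hu' t) (hu'' t))).deriv]
  ring

end kzero

/-- For a `(ξ,ξ,ξ²)`-eigenfunction `u`, the function `k₀` solves
`−k₀'' + ((ξ−t)² + 1 − ξ²)k₀ = −C_ξ u` on `[0,∞)` and the Neumann condition `k₀'(0) = 0`. -/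
theorem kzero_equation
    (ξ : ℝ) (u : ℝ → ℝ) (hu : IsEigen ξ ξ (ξ ^ 2) u) :
    (∀ t : ℝ, 0 ≤ t →
        -(deriv (deriv (kzero ξ u)) t) + ((ξ - t) ^ 2 + 1 - ξ ^ 2) * kzero ξ u t
          = -(Cxi ξ u t)) ∧
    deriv (kzero ξ u) 0 = 0 := by
  have hu₀ : Differentiable ℝ u := hu.differentiable_iterate_deriv 0
  have hu₁ : Differentiable ℝ (deriv u) := hu.differentiable_iterate_deriv 1
  have hu₂ : Differentiable ℝ (deriv (deriv u)) := hu.differentiable_iterate_deriv 2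
  refine ⟨fun t ht => ?_, ?_⟩
  · rw [deriv_deriv_kzero hu₀ hu₁ hu₂, hu.deriv_deriv_deriv_eq ht]
    simp only [kzero, Cxi, hu.deriv_deriv_eq ht]
    ring
  · have hrobin : deriv u 0 = 0 := by simpa using hu.2.2.2
    rw [deriv_kzero hu₀ hu₁]
    simp only [hu.deriv_deriv_eq le_rfl, hrobin]
    ring
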